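/- Let ℓ ≤ m, let A, B be m×ℓ real matrices such that AᵀA is invertible. Then det(BᵀB) ≥ det(BᵀA (AᵀA)⁻¹ AᵀB), with equality in the decomposition BᵀB = BᵀA(AᵀA)⁻¹AᵀB + Bᵀ(I − A(AᵀA)⁻¹Aᵀ)B where the second summand is positive semidefinite. -/

import Mathlib

/-!
`P = A (AᵀA)⁻¹ Aᵀ` is the orthogonal projection onto the column space of `A`, so `P` and `1 - P`
are positive semidefinite and `BᵀB = BᵀPB + Bᵀ(1 - P)B` is a sum of two positive semidefinite
matrices. The determinant is monotone under adding a positive semidefinite matrix: if `X` is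
invertible, `X + Y = S (1 + S⁻¹ Y S⁻¹) S` with `S = √X`, and `det (1 + Z) ≥ 1` for `Z ≥ 0`
because every eigenvalue of `1 + Z` is at least `1`.
-/

open Matrix
open scoped ComplexOrder MatrixOrder

namespace Matrix

section Projection

variable {m n R : Type*} [Fintype m] [Fintype n] [DecidableEq n] [CommRing R] [StarRing R]

theorem isStarProjection_mul_inv_mul_conjTranspose {A : Matrix m n R} (hA : IsUnit (Aᴴ * A).det) :
    IsStarProjection (A * (Aᴴ * A)⁻¹ * Aᴴ) where
  isIdempotentElem := by
    change A * (Aᴴ * A)⁻¹ * Aᴴ * (A * (Aᴴ * A)⁻¹ * Aᴴ) = _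
    rw [show A * (Aᴴ * A)⁻¹ * Aᴴ * (A * (Aᴴ * A)⁻¹ * Aᴴ)
        = A * ((Aᴴ * A)⁻¹ * (Aᴴ * A)) * (Aᴴ * A)⁻¹ * Aᴴ by simp only [Matrix.mul_assoc],
      nonsing_inv_mul _ hA, Matrix.mul_one]
  isSelfAdjoint := by
    simp [IsSelfAdjoint, star_eq_conjTranspose, conjTranspose_nonsing_inv, Matrix.mul_assoc]

end Projection

variable {n 𝕜 : Type*} [Fintype n] [DecidableEq n] [RCLike 𝕜]

theorem PosSemidef.one_le_det_one_add {Z : Matrix n n 𝕜} (hZ : Z.PosSemidef) :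
    1 ≤ (1 + Z).det := by
  set U := hZ.1.eigenvectorUnitary
  set d : n → 𝕜 := RCLike.ofReal ∘ hZ.1.eigenvalues
  have hdiag : 1 + Z = Unitary.conjStarAlgAut 𝕜 _ U (1 + diagonal d) := by
    rw [map_add, map_one, ← hZ.1.spectral_theorem]
  rw [hdiag, Unitary.conjStarAlgAut_apply, det_mul_comm, ← mul_assoc, Unitary.coe_star_mul_self,
    one_mul, ← diagonal_one, diagonal_add, det_diagonal]
  exact Finset.one_le_prod fun i _ => by simpa [d] using hZ.eigenvalues_nonneg i

theorem PosSemidef.det_le_det_add {X Y : Matrix n n 𝕜} (hX : X.PosSemidef) (hY : Y.PosSemidef) :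
    X.det ≤ (X + Y).det := by
  by_cases hX0 : X.det = 0
  · exact hX0 ▸ (hX.add hY).det_nonneg
  set S := CFC.sqrt X
  have hS : S.PosSemidef := (CFC.sqrt_nonneg X).posSemidef
  have hSS : S * S = X := CFC.sqrt_mul_sqrt_self X hX.nonneg
  have hSunit : IsUnit S.det :=
    isUnit_iff_ne_zero.mpr fun h => hX0 (by rw [← hSS, det_mul, h, zero_mul])
  have hZ : (S⁻¹ * Y * S⁻¹).PosSemidef := by
    simpa [hS.1.inv.eq] using hY.conjTranspose_mul_mul_same S⁻¹
  have hXY : X + Y = S * (1 + S⁻¹ * Y * S⁻¹) * S := by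
    rw [mul_add, add_mul, mul_one, hSS, ← mul_assoc, ← mul_assoc, mul_nonsing_inv _ hSunit,
      one_mul, mul_assoc, nonsing_inv_mul _ hSunit, mul_one]
  calc X.det = X.det * 1 := (mul_one _).symm
    _ ≤ X.det * (1 + S⁻¹ * Y * S⁻¹).det :=
      mul_le_mul_of_nonneg_left hZ.one_le_det_one_add hX.det_nonneg
    _ = (X + Y).det := by rw [hXY, det_mul, det_mul, ← hSS, det_mul]; ring

end Matrix

theorem IsStarProjection.posSemidef_conjTranspose_mul_mul {m n 𝕜 : Type*} [Fintype m] [Fintype n]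
    [RCLike 𝕜] {P : Matrix m m 𝕜} (hP : IsStarProjection P) (B : Matrix m n 𝕜) :
    (Bᴴ * P * B).PosSemidef :=
  (nonneg_iff_posSemidef.mp hP.nonneg).conjTranspose_mul_mul_same B

theorem det_BtB_ge_det_projection_general {ℓ m : ℕ}
    (A B : Matrix (Fin m) (Fin ℓ) ℝ) (hA : IsUnit (Aᵀ * A).det) :
    (Bᵀ * B).det ≥ (Bᵀ * A * (Aᵀ * A)⁻¹ * Aᵀ * B).det
    ∧ Bᵀ * B = Bᵀ * A * (Aᵀ * A)⁻¹ * Aᵀ * B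
        + Bᵀ * (1 - A * (Aᵀ * A)⁻¹ * Aᵀ) * B
    ∧ (Bᵀ * (1 - A * (Aᵀ * A)⁻¹ * Aᵀ) * B).PosSemidef := by
  simp only [← conjTranspose_eq_transpose_of_trivial] at hA ⊢
  set P := A * (Aᴴ * A)⁻¹ * Aᴴ
  have hP : IsStarProjection P := isStarProjection_mul_inv_mul_conjTranspose hA
  have hPB : Bᴴ * A * (Aᴴ * A)⁻¹ * Aᴴ * B = Bᴴ * P * B := by simp only [P, Matrix.mul_assoc]
  have hsplit : Bᴴ * B = Bᴴ * P * B + Bᴴ * (1 - P) * B := by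
    rw [Matrix.mul_sub, Matrix.sub_mul, Matrix.mul_one, add_sub_cancel]
  rw [hPB]
  refine ⟨?_, hsplit, hP.one_sub.posSemidef_conjTranspose_mul_mul B⟩
  rw [hsplit]
  exact (hP.posSemidef_conjTranspose_mul_mul B).det_le_det_add
    (hP.one_sub.posSemidef_conjTranspose_mul_mul B)

theorem det_BtB_ge_det_projection {ℓ m : ℕ} (hlm : ℓ ≤ m)
    (A B : Matrix (Fin m) (Fin ℓ) ℝ) (hA : IsUnit (Aᵀ * A).det) :
    (Bᵀ * B).det ≥ (Bᵀ * A * (Aᵀ * A)⁻¹ * Aᵀ * B).det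
    ∧ Bᵀ * B = Bᵀ * A * (Aᵀ * A)⁻¹ * Aᵀ * B
        + Bᵀ * (1 - A * (Aᵀ * A)⁻¹ * Aᵀ) * B
    ∧ (Bᵀ * (1 - A * (Aᵀ * A)⁻¹ * Aᵀ) * B).PosSemidef :=
  det_BtB_ge_det_projection_general A B hA
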